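/- arXiv:2011.04357 — 2 statements merged into one kernel-verified Lean document; each statement's English description precedes it below -/
import Mathlib

section
/- For any tuple (X, Y, Z) satisfying the forward equations, at the final period T the terminal occupancy measures plus the cumulative absorption probability equal one: ∑_{i∈S̃} Y_i + Z^T = 1. (This is the t = T case of the valid-inequality hyperplanes of Proposition 1 for the formulation (MIP-MMDP).) -/
open Finset

/-- Proposition 1, case t = T: terminal occupancy measures plus the cumulative
absorption probability equal one. -/
theorem stmt_2 {S : Type*} [Fintype S] [Nonempty S] (T : ℕ) (hT : 3 ≤ T)
    (P : S → Bool → S → ℝ) (Q : S → Bool → ℝ)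
    (hP : ∀ i a j, 0 ≤ P i a j) (hQ : ∀ i a, 0 ≤ Q i a)
    (hPQ : ∀ i a, (∑ j, P i a j) + Q i a = 1)
    (θ : S → ℝ) (hθ : ∀ i, 0 ≤ θ i) (hθ1 : ∑ i, θ i = 1)
    (X : ℕ → S → Bool → ℝ) (Y : S → ℝ) (Z : ℕ → ℝ)
    (hXnn : ∀ t i a, 0 ≤ X t i a) (hYnn : ∀ i, 0 ≤ Y i) (hZnn : ∀ t, 0 ≤ Z t)
    (hZ1 : Z 1 = 0)
    (hF1 : ∀ i, ∑ a, X 1 i a = θ i)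
    (hF2 : ∀ t, 2 ≤ t → t ≤ T - 1 → ∀ j,
      ∑ i, ∑ a, X (t - 1) i a * P i a j = ∑ a, X t j a)
    (hF3 : ∀ j, ∑ i, ∑ a, X (T - 1) i a * P i a j = Y j)
    (hF4 : ∀ t, 2 ≤ t → t ≤ T →
      ∑ i, ∑ a, X (t - 1) i a * Q i a = Z t - Z (t - 1)) :
    (∑ i, Y i) + Z T = 1 := by
  -- key algebraic identity
  have key : ∀ W : S → Bool → ℝ,
      (∑ j, ∑ i, ∑ a, W i a * P i a j) + (∑ i, ∑ a, W i a * Q i a)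
        = ∑ i, ∑ a, W i a := by
    intro W
    have h1 : (∑ j, ∑ i, ∑ a, W i a * P i a j)
        = ∑ i, ∑ a, W i a * ∑ j, P i a j := by
      rw [Finset.sum_comm]
      refine Finset.sum_congr rfl fun i _ => ?_
      rw [Finset.sum_comm]
      refine Finset.sum_congr rfl fun a _ => ?_
      rw [Finset.mul_sum]
    rw [h1, ← Finset.sum_add_distrib]
    refine Finset.sum_congr rfl fun i _ => ?_
    rw [← Finset.sum_add_distrib]
    refine Finset.sum_congr rfl fun a _ => ?_
    rw [← mul_add, hPQ, mul_one]
  -- invariant: total mass is 1 for 1 ≤ t ≤ T-1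
  have inv : ∀ t, 1 ≤ t → t ≤ T - 1 → (∑ i, ∑ a, X t i a) + Z t = 1 := by
    intro t h1
    induction t, h1 using Nat.le_induction with
    | base =>
      intro _
      simp only [hF1, hθ1, hZ1, add_zero]
    | succ n hn ih =>
      intro h2
      have hn2 : 2 ≤ n + 1 := by omega
      have hnT : n + 1 ≤ T - 1 := h2
      have e1 : ∀ j, ∑ i, ∑ a, X n i a * P i a j = ∑ a, X (n + 1) j a := by
        intro j
        have := hF2 (n + 1) hn2 hnT j
        simpa using this
      have e2 : ∑ i, ∑ a, X n i a * Q i a = Z (n + 1) - Z n := by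
        have := hF4 (n + 1) hn2 (by omega)
        simpa using this
      have := key (X n)
      rw [Finset.sum_congr rfl (fun j _ => e1 j), e2] at this
      have ihn := ih (by omega)
      linarith
  have hinv := inv (T - 1) (by omega) le_rfl
  have e2 : ∑ i, ∑ a, X (T - 1) i a * Q i a = Z T - Z (T - 1) := by
    have := hF4 T (by omega) le_rfl
    simpa using this
  have hk := key (X (T - 1))
  rw [Finset.sum_congr rfl (fun j _ => hF3 j), e2] at hk
  linarith
end

section
/- Proposition 2 (aggregated capacity valid inequality): let n > 0 be a real number (the population size) and let C_t ≥ 0 for t ∈ {1,…,T−1} be capacities. If a tuple (X, Y, Z) satisfies the forward equations and the capacity constraints n · ∑_{i∈S̃} X^t_{i,1} ≤ C_t for all t ∈ {1,…,T−1}, then ∑_{t=1}^{T−1} ( ∑_{i∈S̃} X^t_{i,0} + Z^t ) ≥ T − ( ∑_{t=1}^{T−1} C_t + n ) / n. -/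
open Finset

/-- Proposition 2 (aggregated capacity valid inequality): if (X, Y, Z) satisfies the
forward equations and the per-epoch capacity constraints n·∑_i X^t_{i,1} ≤ C_t, then
∑_{t=1}^{T−1} ( ∑_i X^t_{i,0} + Z^t ) ≥ T − ( ∑_{t=1}^{T−1} C_t + n ) / n. -/
theorem stmt_4 {S : Type*} [Fintype S] [Nonempty S] (T : ℕ) (hT : 3 ≤ T)
    (P : S → Bool → S → ℝ) (Q : S → Bool → ℝ)
    (hP : ∀ i a j, 0 ≤ P i a j) (hQ : ∀ i a, 0 ≤ Q i a)
    (hPQ : ∀ i a, (∑ j, P i a j) + Q i a = 1)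
    (θ : S → ℝ) (hθ : ∀ i, 0 ≤ θ i) (hθ1 : ∑ i, θ i = 1)
    (n : ℝ) (hn : 0 < n) (C : ℕ → ℝ) (hC : ∀ t, 1 ≤ t → t ≤ T - 1 → 0 ≤ C t)
    (X : ℕ → S → Bool → ℝ) (Y : S → ℝ) (Z : ℕ → ℝ)
    (hXnn : ∀ t i a, 0 ≤ X t i a) (hYnn : ∀ i, 0 ≤ Y i) (hZnn : ∀ t, 0 ≤ Z t)
    (hZ1 : Z 1 = 0)
    (hF1 : ∀ i, ∑ a, X 1 i a = θ i)
    (hF2 : ∀ t, 2 ≤ t → t ≤ T - 1 → ∀ j,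
      ∑ i, ∑ a, X (t - 1) i a * P i a j = ∑ a, X t j a)
    (hF3 : ∀ j, ∑ i, ∑ a, X (T - 1) i a * P i a j = Y j)
    (hF4 : ∀ t, 2 ≤ t → t ≤ T →
      ∑ i, ∑ a, X (t - 1) i a * Q i a = Z t - Z (t - 1))
    (hcap : ∀ t, 1 ≤ t → t ≤ T - 1 → n * ∑ i, X t i true ≤ C t) :
    ∑ t ∈ Finset.Icc 1 (T - 1), ((∑ i, X t i false) + Z t) ≥
      (T : ℝ) - ((∑ t ∈ Finset.Icc 1 (T - 1), C t) + n) / n := by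
  -- Mass conservation: total occupancy plus absorbed mass is 1
  have hmass : ∀ t, 1 ≤ t → t ≤ T - 1 → (∑ i, ∑ a, X t i a) + Z t = 1 := by
    intro t ht
    induction t, ht using Nat.le_induction with
    | base =>
      intro _
      simp only [hF1, hθ1, hZ1, add_zero]
    | succ t ht ih =>
      intro hle
      have ht' : t ≤ T - 1 := Nat.le_of_succ_le hle
      have ihv := ih ht'
      have h2 : 2 ≤ t + 1 := by omega
      have hTle : t + 1 ≤ T := by omega
      have hsub : (t + 1) - 1 = t := by omega
      have e2 := hF2 (t + 1) h2 hle
      have e4 := hF4 (t + 1) h2 hTle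
      rw [hsub] at e2 e4
      have key : (∑ j, ∑ a, X (t+1) j a) =
          (∑ i, ∑ a, X t i a) - (Z (t+1) - Z t) := by
        calc (∑ j, ∑ a, X (t+1) j a)
            = ∑ j, ∑ i, ∑ a, X t i a * P i a j := by
              exact (Finset.sum_congr rfl fun j _ => (e2 j).symm)
          _ = ∑ i, ∑ a, X t i a * (∑ j, P i a j) := by
              rw [Finset.sum_comm]
              refine Finset.sum_congr rfl fun i _ => ?_
              rw [Finset.sum_comm]
              exact Finset.sum_congr rfl fun a _ => (Finset.mul_sum _ _ _).symm
          _ = ∑ i, ∑ a, X t i a * (1 - Q i a) := by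
              refine Finset.sum_congr rfl fun i _ => Finset.sum_congr rfl fun a _ => ?_
              have := hPQ i a
              rw [show (∑ j, P i a j) = 1 - Q i a by linarith]
          _ = (∑ i, ∑ a, X t i a) - (∑ i, ∑ a, X t i a * Q i a) := by
              simp [mul_sub, Finset.sum_sub_distrib]
          _ = (∑ i, ∑ a, X t i a) - (Z (t+1) - Z t) := by rw [e4]
      rw [key]; linarith
  -- pointwise bound
  have hpt : ∀ t ∈ Finset.Icc 1 (T - 1),
      (1 : ℝ) - C t / n ≤ (∑ i, X t i false) + Z t := by
    intro t htm
    simp only [Finset.mem_Icc] at htm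
    have hm := hmass t htm.1 htm.2
    have hcapt := hcap t htm.1 htm.2
    have hsplit : (∑ i, ∑ a, X t i a) = (∑ i, X t i false) + (∑ i, X t i true) := by
      rw [← Finset.sum_add_distrib]
      exact Finset.sum_congr rfl fun i _ => by simp [Fintype.sum_bool, add_comm]
    have htrue : (∑ i, X t i true) ≤ C t / n := by
      rw [le_div_iff₀ hn, mul_comm]
      exact hcapt
    linarith [hsplit ▸ hm]
  have hsum := Finset.sum_le_sum hpt
  have hcard : (Finset.Icc 1 (T - 1)).card = T - 1 := by
    rw [Nat.card_Icc]; omega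
  have hsum2 : ∑ t ∈ Finset.Icc 1 (T - 1), ((1 : ℝ) - C t / n)
      = ((T : ℝ) - 1) - (∑ t ∈ Finset.Icc 1 (T - 1), C t) / n := by
    rw [Finset.sum_sub_distrib, Finset.sum_const, hcard, nsmul_eq_mul, mul_one, ← Finset.sum_div]
    have : ((T - 1 : ℕ) : ℝ) = (T : ℝ) - 1 := by
      rw [Nat.cast_sub (by omega)]; simp
    rw [this]
  rw [hsum2] at hsum
  have : ((∑ t ∈ Finset.Icc 1 (T - 1), C t) + n) / n
      = (∑ t ∈ Finset.Icc 1 (T - 1), C t) / n + 1 := by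
    field_simp
  rw [ge_iff_le, this]
  linarith
end
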